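/- arXiv:2310.06808 — 6 statements merged into one kernel-verified Lean document; each statement's English description precedes it below -/
import Mathlib

section
/- Let a, b, c, d be positive real numbers with bc > ad, and define the odds ratio OR = (bc)/(ad) and the phi (Pearson) correlation coefficient r = (bc - ad)/sqrt((a+c)(b+d)(a+b)(c+d)). Then r ≤ (sqrt(OR) - 1)/(sqrt(OR) + 1). -/
/-!
Write `u = √(ad)` and `v = √(bc)`, so that `√OR = v / u` and the right-hand side is `(v - u) / (v + u)`.
By Cauchy–Schwarz both margin products `(a + b)(c + d)` and `(a + c)(b + d)` are at least `(u + v)²`,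
so the denominator of `r` is at least `(u + v)²`, and `r ≤ (v² - u²) / (u + v)² = (v - u) / (v + u)`.
-/

open Real

namespace PhiCoefficient

/-- Cauchy–Schwarz for the vectors `(√a, √b)` and `(√d, √c)`. -/
lemma sq_sqrt_mul_add_sqrt_mul_le {a b c d : ℝ} (ha : 0 ≤ a) (hb : 0 ≤ b) (hc : 0 ≤ c)
    (hd : 0 ≤ d) : (√(a * d) + √(b * c)) ^ 2 ≤ (a + b) * (c + d) := by
  rw [sqrt_mul ha, sqrt_mul hb]
  nlinarith [sq_nonneg (√a * √c - √b * √d), sq_sqrt ha, sq_sqrt hb, sq_sqrt hc, sq_sqrt hd]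

lemma sq_sqrt_mul_add_sqrt_mul_le_sqrt_margins {a b c d : ℝ} (ha : 0 ≤ a) (hb : 0 ≤ b)
    (hc : 0 ≤ c) (hd : 0 ≤ d) :
    (√(a * d) + √(b * c)) ^ 2 ≤ √((a + c) * (b + d) * (a + b) * (c + d)) := by
  have hrows := sq_sqrt_mul_add_sqrt_mul_le ha hb hc hd
  have hcols : (√(a * d) + √(b * c)) ^ 2 ≤ (a + c) * (b + d) := by
    simpa only [mul_comm b c, add_comm √(a * d)] using sq_sqrt_mul_add_sqrt_mul_le ha hc hb hd
  rw [le_sqrt (by positivity) (by positivity)]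
  calc ((√(a * d) + √(b * c)) ^ 2) ^ 2 = (√(a * d) + √(b * c)) ^ 2 * (√(a * d) + √(b * c)) ^ 2 :=
        sq _
    _ ≤ (a + c) * (b + d) * ((a + b) * (c + d)) :=
        mul_le_mul hcols hrows (by positivity) (by positivity)
    _ = (a + c) * (b + d) * (a + b) * (c + d) := by ring

lemma sub_div_sq_sqrt_add_sqrt {x y : ℝ} (hx : 0 < x) (hy : 0 ≤ y) :
    (y - x) / (√x + √y) ^ 2 = (√y - √x) / (√y + √x) := by
  have hsum : √y + √x ≠ 0 := by
    have := sqrt_pos.mpr hx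
    positivity
  have hdiff : y - x = (√y - √x) * (√y + √x) := by
    linear_combination sq_sqrt hx.le - sq_sqrt hy
  rw [hdiff, add_comm √x, pow_two, mul_div_mul_right _ _ hsum]

lemma sqrt_div_sub_one_div_sqrt_div_add_one {x y : ℝ} (hx : 0 < x) (hy : 0 ≤ y) :
    (√(y / x) - 1) / (√(y / x) + 1) = (√y - √x) / (√y + √x) := by
  have : 0 < √x := sqrt_pos.mpr hx
  rw [sqrt_div hy]
  field_simp

end PhiCoefficient

open PhiCoefficient in
theorem stmt_0 (a b c d : ℝ) (ha : 0 < a) (hb : 0 < b) (hc : 0 < c) (hd : 0 < d)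
    (h : a * d < b * c) :
    (b * c - a * d) / Real.sqrt ((a + c) * (b + d) * (a + b) * (c + d)) ≤
      (Real.sqrt ((b * c) / (a * d)) - 1) / (Real.sqrt ((b * c) / (a * d)) + 1) := by
  have had : 0 < a * d := by positivity
  rw [sqrt_div_sub_one_div_sqrt_div_add_one had (by positivity),
    ← sub_div_sq_sqrt_add_sqrt had (by positivity)]
  have hpos : 0 < (√(a * d) + √(b * c)) ^ 2 := by
    have := sqrt_pos.mpr had
    positivity
  exact div_le_div_of_nonneg_left (by linarith) hpos
    (sq_sqrt_mul_add_sqrt_mul_le_sqrt_margins ha.le hb.le hc.le hd.le)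
end

section
/- Let p00, p10, p01, p11 ∈ (0,1) be conditional probabilities P(Y=1 | X=x, W=w) and let q00, q10, q01, q11 > 0 be the joint probabilities P(X=x, W=w). Define SS(β0, βX, βW) = q00·(p00(1−β0)² + (1−p00)β0²) + q10·(p10(1−β0−βX)² + (1−p10)(β0+βX)²) + q01·(p01(1−β0−βW)² + (1−p01)(β0+βW)²) + q11·(p11(1−β0−βX−βW)² + (1−p11)(β0+βX+βW)²). If p00 > p10 and p01 > p11 (Strong Simpson's Paradox), then any global minimizer (β0*, βX*, βW*) of SS over ℝ³ satisfies βX* < 0. -/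
/-!
At a least-squares optimum the three normal equations hold. Writing `t` for the weighted residual
`q11 · (β0 + βX + βW - p11)` of the cell `(1,1)`, they force the weighted residuals of the cells
`00, 10, 01` to be `t, -t, -t`. Reading `βX` off the stratum `W = 0` gives
`βX = (p10 - p00) - t (1/q00 + 1/q10)`, and off the stratum `W = 1` gives
`βX = (p11 - p01) + t (1/q01 + 1/q11)`; whatever the sign of `t`, one of these is negative.
-/

lemma eq_zero_of_forall_nonneg_mul_sq_add_mul {a b : ℝ} (h : ∀ t : ℝ, 0 ≤ a * t ^ 2 + b * t) :
    b = 0 := by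
  have hdiscrim : discrim a b 0 ≤ 0 := discrim_le_zero fun t => by simpa [sq] using h t
  have hb_sq : b ^ 2 ≤ 0 := by simpa [discrim] using hdiscrim
  exact pow_eq_zero_iff two_ne_zero |>.mp (le_antisymm hb_sq (sq_nonneg b))

lemma slope_neg_of_normal_equations {p00 p10 p01 p11 q00 q10 q01 q11 β0 βX βW : ℝ}
    (hq00 : 0 < q00) (hq10 : 0 < q10) (hq01 : 0 < q01) (hq11 : 0 < q11)
    (h1 : p10 < p00) (h2 : p11 < p01)
    (hβ0 : q00 * (β0 - p00) + q10 * (β0 + βX - p10) + q01 * (β0 + βW - p01)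
      + q11 * (β0 + βX + βW - p11) = 0)
    (hβX : q10 * (β0 + βX - p10) + q11 * (β0 + βX + βW - p11) = 0)
    (hβW : q01 * (β0 + βW - p01) + q11 * (β0 + βX + βW - p11) = 0) :
    βX < 0 := by
  set t := q11 * (β0 + βX + βW - p11) with ht
  have hr00 : q00 * (β0 - p00) = t := by linarith
  have hr10 : q10 * (β0 + βX - p10) = -t := by linarith
  have hr01 : q01 * (β0 + βW - p01) = -t := by linarith
  rcases le_or_gt 0 t with ht_nonneg | ht_neg
  · have hW0 : q00 * q10 * βX = -(q00 + q10) * t - q00 * q10 * (p00 - p10) := by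
      linear_combination q00 * hr10 - q10 * hr00
    have : q00 * q10 * βX < 0 := by
      nlinarith [mul_pos (mul_pos hq00 hq10) (sub_pos.mpr h1)]
    exact neg_of_mul_neg_right this (mul_pos hq00 hq10).le
  · have hW1 : q01 * q11 * βX = (q01 + q11) * t - q01 * q11 * (p01 - p11) := by
      linear_combination q11 * ht - q11 * hr01
    have : q01 * q11 * βX < 0 := by
      nlinarith [mul_pos (mul_pos hq01 hq11) (sub_pos.mpr h2)]
    exact neg_of_mul_neg_right this (mul_pos hq01 hq11).le

theorem stmt_6_general (p00 p10 p01 p11 q00 q10 q01 q11 : ℝ)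
    (hq00 : 0 < q00) (hq10 : 0 < q10) (hq01 : 0 < q01) (hq11 : 0 < q11)
    (h1 : p10 < p00) (h2 : p11 < p01)
    (SS : ℝ → ℝ → ℝ → ℝ)
    (hSS : ∀ β0 βX βW, SS β0 βX βW =
      q00 * (p00 * (1 - β0) ^ 2 + (1 - p00) * β0 ^ 2) +
      q10 * (p10 * (1 - β0 - βX) ^ 2 + (1 - p10) * (β0 + βX) ^ 2) +
      q01 * (p01 * (1 - β0 - βW) ^ 2 + (1 - p01) * (β0 + βW) ^ 2) +
      q11 * (p11 * (1 - β0 - βX - βW) ^ 2 + (1 - p11) * (β0 + βX + βW) ^ 2))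
    (β0 βX βW : ℝ) (hmin : ∀ b0 bx bw, SS β0 βX βW ≤ SS b0 bx bw) :
    βX < 0 := by
  have hβ0 := eq_zero_of_forall_nonneg_mul_sq_add_mul
    (a := q00 + q10 + q01 + q11) (b := 2 * (q00 * (β0 - p00) + q10 * (β0 + βX - p10)
      + q01 * (β0 + βW - p01) + q11 * (β0 + βX + βW - p11))) fun t => by
    have := hmin (β0 + t) βX βW
    rw [hSS, hSS] at this
    linear_combination this
  have hβX := eq_zero_of_forall_nonneg_mul_sq_add_mul
    (a := q10 + q11) (b := 2 * (q10 * (β0 + βX - p10) + q11 * (β0 + βX + βW - p11))) fun t => by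
    have := hmin β0 (βX + t) βW
    rw [hSS, hSS] at this
    linear_combination this
  have hβW := eq_zero_of_forall_nonneg_mul_sq_add_mul
    (a := q01 + q11) (b := 2 * (q01 * (β0 + βW - p01) + q11 * (β0 + βX + βW - p11))) fun t => by
    have := hmin β0 βX (βW + t)
    rw [hSS, hSS] at this
    linear_combination this
  exact slope_neg_of_normal_equations (β0 := β0) (βW := βW) hq00 hq10 hq01 hq11 h1 h2
    (by linarith) (by linarith) (by linarith)

theorem stmt_6 (p00 p10 p01 p11 q00 q10 q01 q11 : ℝ)
    (hp00 : p00 ∈ Set.Ioo (0:ℝ) 1) (hp10 : p10 ∈ Set.Ioo (0:ℝ) 1)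
    (hp01 : p01 ∈ Set.Ioo (0:ℝ) 1) (hp11 : p11 ∈ Set.Ioo (0:ℝ) 1)
    (hq00 : 0 < q00) (hq10 : 0 < q10) (hq01 : 0 < q01) (hq11 : 0 < q11)
    (h1 : p10 < p00) (h2 : p11 < p01)
    (SS : ℝ → ℝ → ℝ → ℝ)
    (hSS : ∀ β0 βX βW, SS β0 βX βW =
      q00 * (p00 * (1 - β0) ^ 2 + (1 - p00) * β0 ^ 2) +
      q10 * (p10 * (1 - β0 - βX) ^ 2 + (1 - p10) * (β0 + βX) ^ 2) +
      q01 * (p01 * (1 - β0 - βW) ^ 2 + (1 - p01) * (β0 + βW) ^ 2) +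
      q11 * (p11 * (1 - β0 - βX - βW) ^ 2 + (1 - p11) * (β0 + βX + βW) ^ 2))
    (β0 βX βW : ℝ) (hmin : ∀ b0 bx bw, SS β0 βX βW ≤ SS b0 bx bw) :
    βX < 0 :=
  stmt_6_general p00 p10 p01 p11 q00 q10 q01 q11 hq00 hq10 hq01 hq11 h1 h2 SS hSS β0 βX βW hmin
end

section
/- With r = 0.0328 and OR_WY = 1.4: f(1.4) = (sqrt(1.4)−1)/(sqrt(1.4)+1) and the Odds Ratio Condition f(OR_WX)·f(1.4) > 0.0328 requires OR_WX > ((1 + 0.0328/f(1.4))/(1 − 0.0328/f(1.4)))², and this threshold exceeds 5. -/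
/-!
Yule's `Y(t) = (√t - 1)/(√t + 1)` is a strictly increasing function of `√t`, and solving
`Y(t) = c` gives `√t = (1 + c)/(1 - c)`. Hence `Y(t) > c` exactly when `t` exceeds
`((1 + c)/(1 - c))²`, which turns the odds ratio condition `Y(OR_WX) · Y(1.4) > r` into the lower
bound on `OR_WX`. The same equivalence shows that this threshold exceeds `5` exactly when
`Y(5) · Y(1.4) < r`, and numerically `Y(5) · Y(1.4) ≈ 0.0321 < 0.0328`.
-/

open Real

/-- Yule's coefficient of colligation of an odds ratio `t`; this is the paper's `f`. -/
noncomputable def yuleY (t : ℝ) : ℝ := (√t - 1) / (√t + 1)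

section

variable {c t : ℝ}

theorem yuleY_lt_iff_sqrt_lt (hc : c < 1) : yuleY t < c ↔ √t < (1 + c) / (1 - c) := by
  have hpos : 0 < √t + 1 := by positivity
  rw [yuleY, div_lt_iff₀ hpos, lt_div_iff₀ (by linarith)]
  constructor <;> intro h <;> linarith

theorem lt_yuleY_iff_lt_sqrt (hc : c < 1) : c < yuleY t ↔ (1 + c) / (1 - c) < √t := by
  have hpos : 0 < √t + 1 := by positivity
  rw [yuleY, lt_div_iff₀ hpos, div_lt_iff₀ (by linarith)]
  constructor <;> intro h <;> linarith

theorem yuleY_lt_iff (hc₀ : -1 < c) (hc₁ : c < 1) : yuleY t < c ↔ t < ((1 + c) / (1 - c)) ^ 2 := by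
  rw [yuleY_lt_iff_sqrt_lt hc₁, sqrt_lt' (div_pos (by linarith) (by linarith))]

theorem lt_yuleY_iff (hc₀ : -1 ≤ c) (hc₁ : c < 1) : c < yuleY t ↔ ((1 + c) / (1 - c)) ^ 2 < t := by
  rw [lt_yuleY_iff_lt_sqrt hc₁, lt_sqrt (div_nonneg (by linarith) (by linarith))]

end

theorem lt_yuleY_one_point_four : 0.0328 < yuleY 1.4 :=
  (lt_yuleY_iff (by norm_num) (by norm_num)).2 (by norm_num)

theorem yuleY_five_mul_yuleY_one_point_four_lt : yuleY 5 * yuleY 1.4 < 0.0328 := by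
  have h₅ : yuleY 5 < 0.382 := (yuleY_lt_iff (by norm_num) (by norm_num)).2 (by norm_num)
  have h₅' : 0 ≤ yuleY 5 := ((lt_yuleY_iff (by norm_num) (by norm_num)).2 (by norm_num)).le
  have h₁₄ : yuleY 1.4 < 0.084 := (yuleY_lt_iff (by norm_num) (by norm_num)).2 (by norm_num)
  calc yuleY 5 * yuleY 1.4 < 0.382 * 0.084 :=
        mul_lt_mul'' h₅ h₁₄ h₅' (by linarith [lt_yuleY_one_point_four])
    _ < 0.0328 := by norm_num

theorem stmt_14 :
    let f : ℝ → ℝ := fun t => (Real.sqrt t - 1) / (Real.sqrt t + 1)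
    (∀ ORWX > (1:ℝ), f ORWX * f 1.4 > 0.0328 →
        ORWX > ((1 + 0.0328 / f 1.4) / (1 - 0.0328 / f 1.4)) ^ 2) ∧
      ((1 + 0.0328 / f 1.4) / (1 - 0.0328 / f 1.4)) ^ 2 > 5 := by
  show (∀ x > (1:ℝ), yuleY x * yuleY 1.4 > 0.0328 →
        x > ((1 + 0.0328 / yuleY 1.4) / (1 - 0.0328 / yuleY 1.4)) ^ 2) ∧
      ((1 + 0.0328 / yuleY 1.4) / (1 - 0.0328 / yuleY 1.4)) ^ 2 > 5
  have hY : 0.0328 < yuleY 1.4 := lt_yuleY_one_point_four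
  have hY₀ : 0 < yuleY 1.4 := by linarith
  have hc₀ : 0 < 0.0328 / yuleY 1.4 := by positivity
  have hc₁ : 0.0328 / yuleY 1.4 < 1 := (div_lt_one hY₀).2 hY
  constructor
  · intro x _ hx
    exact (lt_yuleY_iff (by linarith) hc₁).1 ((div_lt_iff₀ hY₀).2 hx)
  · exact (yuleY_lt_iff (by linarith) hc₁).1
      ((lt_div_iff₀ hY₀).2 yuleY_five_mul_yuleY_one_point_four_lt)
end

section
/- If the Risk Ratio Condition holds, i.e. R1·R2/(R1 + R2 − 1) > R for reals R1, R2 > 1 and R > 1, then the Cornfield Condition holds: min(R1, R2) > R. -/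
theorem mul_div_add_sub_one_le_left {a b : ℝ} (ha : 1 ≤ a) (hb : 0 < b) :
    a * b / (a + b - 1) ≤ a := by
  rw [div_le_iff₀ (by linarith)]
  nlinarith

theorem mul_div_add_sub_one_le_min {a b : ℝ} (ha : 1 ≤ a) (hb : 1 ≤ b) :
    a * b / (a + b - 1) ≤ min a b := by
  refine le_min (mul_div_add_sub_one_le_left ha (by linarith)) ?_
  rw [mul_comm, add_comm a b]
  exact mul_div_add_sub_one_le_left hb (by linarith)

theorem stmt_17_general (R1 R2 R : ℝ) (h1 : 1 < R1) (h2 : 1 < R2)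
    (h : R1 * R2 / (R1 + R2 - 1) > R) :
    min R1 R2 > R :=
  h.trans_le (mul_div_add_sub_one_le_min h1.le h2.le)

theorem stmt_17 (R1 R2 R : ℝ) (h1 : 1 < R1) (h2 : 1 < R2) (hR : 1 < R)
    (h : R1 * R2 / (R1 + R2 - 1) > R) :
    min R1 R2 > R :=
  stmt_17_general R1 R2 R h1 h2 h
end

section
/- For a 2×2 table with positive cell probabilities, the phi coefficient r satisfies −(sqrt(OR')−1)/(sqrt(OR')+1) ≤ r whenever r < 0, where OR' = 1/OR > 1 is the reciprocal odds ratio; equivalently, for all positive a, b, c, d: |bc − ad|/sqrt((a+c)(b+d)(a+b)(c+d)) ≤ |sqrt(bc) − sqrt(ad)|/(sqrt(bc) + sqrt(ad)). -/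
/-!
Write `S = √(bc)` and `T = √(ad)`, so that `bc - ad = (S - T)(S + T)`. By Cauchy–Schwarz,
`(a + b)(d + c) ≥ (√(ad) + √(bc))²` and `(a + c)(d + b) ≥ (√(ad) + √(cb))²`, so the square root of
the product of the four margins is at least `(S + T)²`, which gives `|r| ≤ |S - T| / (S + T)`.
When `r < 0` we have `S < T`, and the one-sided bound in terms of `OR' = ad / bc` is the same
inequality, because `(√OR' - 1) / (√OR' + 1) = (T - S) / (T + S)`.
-/

open Real

lemma sq_sqrt_mul_add_sqrt_mul_le {a b c d : ℝ} (ha : 0 ≤ a) (hb : 0 ≤ b) (hc : 0 ≤ c)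
    (hd : 0 ≤ d) : (√(a * d) + √(b * c)) ^ 2 ≤ (a + b) * (d + c) := by
  rw [sqrt_mul ha, sqrt_mul hb]
  calc (√a * √d + √b * √c) ^ 2
      ≤ (√a ^ 2 + √b ^ 2) * (√d ^ 2 + √c ^ 2) := by nlinarith [sq_nonneg (√a * √c - √b * √d)]
    _ = (a + b) * (d + c) := by rw [sq_sqrt ha, sq_sqrt hb, sq_sqrt hc, sq_sqrt hd]

lemma sq_sqrt_mul_add_sqrt_mul_le_sqrt_margins {a b c d : ℝ} (ha : 0 ≤ a) (hb : 0 ≤ b)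
    (hc : 0 ≤ c) (hd : 0 ≤ d) :
    (√(b * c) + √(a * d)) ^ 2 ≤ √((a + c) * (b + d) * (a + b) * (c + d)) := by
  have hrow := sq_sqrt_mul_add_sqrt_mul_le ha hb hc hd
  have hcol := sq_sqrt_mul_add_sqrt_mul_le ha hc hb hd
  rw [mul_comm c b] at hcol
  rw [le_sqrt (by positivity) (by positivity)]
  calc ((√(b * c) + √(a * d)) ^ 2) ^ 2
      = (√(a * d) + √(b * c)) ^ 2 * (√(a * d) + √(b * c)) ^ 2 := by ring
    _ ≤ ((a + c) * (d + b)) * ((a + b) * (d + c)) := by gcongr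
    _ = (a + c) * (b + d) * (a + b) * (c + d) := by ring

lemma abs_phi_le {a b c d : ℝ} (ha : 0 < a) (hb : 0 < b) (hc : 0 < c) (hd : 0 < d) :
    |b * c - a * d| / √((a + c) * (b + d) * (a + b) * (c + d)) ≤
      |√(b * c) - √(a * d)| / (√(b * c) + √(a * d)) := by
  have hsum : 0 < √(b * c) + √(a * d) := by positivity
  have hnum : |b * c - a * d| = |√(b * c) - √(a * d)| * (√(b * c) + √(a * d)) := by
    rw [← abs_of_pos hsum, ← abs_mul]
    congr 1
    linear_combination -sq_sqrt (by positivity : 0 ≤ b * c) + sq_sqrt (by positivity : 0 ≤ a * d)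
  calc |b * c - a * d| / √((a + c) * (b + d) * (a + b) * (c + d))
      ≤ |√(b * c) - √(a * d)| * (√(b * c) + √(a * d)) / (√(b * c) + √(a * d)) ^ 2 := by
        rw [hnum]
        exact div_le_div_of_nonneg_left (by positivity) (by positivity)
          (sq_sqrt_mul_add_sqrt_mul_le_sqrt_margins ha.le hb.le hc.le hd.le)
    _ = |√(b * c) - √(a * d)| / (√(b * c) + √(a * d)) := by field_simp

lemma div_sub_one_div_div_add_one {S T : ℝ} (hS : S ≠ 0) :
    (T / S - 1) / (T / S + 1) = (T - S) / (T + S) := by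
  field_simp

theorem stmt_18 (a b c d : ℝ) (ha : 0 < a) (hb : 0 < b) (hc : 0 < c) (hd : 0 < d) :
    (((b * c - a * d) / Real.sqrt ((a + c) * (b + d) * (a + b) * (c + d)) < 0 →
        -((Real.sqrt ((a * d) / (b * c)) - 1) / (Real.sqrt ((a * d) / (b * c)) + 1)) ≤
          (b * c - a * d) / Real.sqrt ((a + c) * (b + d) * (a + b) * (c + d)))) ∧
      |b * c - a * d| / Real.sqrt ((a + c) * (b + d) * (a + b) * (c + d)) ≤
        |Real.sqrt (b * c) - Real.sqrt (a * d)| / (Real.sqrt (b * c) + Real.sqrt (a * d)) := by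
  have hbound := abs_phi_le ha hb hc hd
  refine ⟨fun hneg => ?_, hbound⟩
  have hlt : b * c < a * d := by
    by_contra! h
    exact hneg.not_ge (div_nonneg (sub_nonneg.mpr h) (sqrt_nonneg _))
  have hST : √(b * c) ≤ √(a * d) := sqrt_le_sqrt hlt.le
  rw [sqrt_div (by positivity), div_sub_one_div_div_add_one (by positivity)]
  calc -((√(a * d) - √(b * c)) / (√(a * d) + √(b * c)))
      = -(|√(b * c) - √(a * d)| / (√(b * c) + √(a * d))) := by
        rw [abs_of_nonpos (sub_nonpos.mpr hST), neg_sub, add_comm]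
    _ ≤ -|(b * c - a * d) / √((a + c) * (b + d) * (a + b) * (c + d))| := by
        rwa [neg_le_neg_iff, abs_div, abs_of_nonneg (sqrt_nonneg _)]
    _ ≤ (b * c - a * d) / √((a + c) * (b + d) * (a + b) * (c + d)) := neg_abs_le _
end

section
/- If p00 > p10 and p01 > p11 with all four numbers in (0,1), and β0, βX, βW are reals with βX ≥ 0 such that β0 ∈ [p10, p00] or β0 + βX ∈ [p10, p00], and β0 + βW ∈ [p11, p01] or β0 + βX + βW ∈ [p11, p01], then there exists ε > 0 and a perturbation of (β0, βX, βW) with strictly smaller value of SS (the weighted sum of squares with any fixed positive weights q00, q10, q01, q11); hence no point with βX ≥ 0 is a local minimum of SS. -/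
/-!
Up to a constant, `SS` is the weighted squared distance between the fitted values
`β0 + βX x + βW w` and the risks `p_{xw}`, so half its gradient collects the weighted residuals
`q_{xw} e_{xw}`. If the gradient vanished, the normal equations would give
`q00 e00 = q11 e11 = -q10 e10 = -q01 e01`: if `e11 ≥ 0` then `β0 ≥ p00 > p10 ≥ β0 + βX`, and if
`e11 ≤ 0` then `β0 + βW ≥ p01 > p11 ≥ β0 + βX + βW`; either way `βX < 0`. So for `βX ≥ 0` the
gradient is nonzero, and a short step against it strictly decreases `SS`.
-/

open Filter Topology

theorem eq_zero_of_sq_add_sq_add_sq_nonpos {R : Type*} [CommRing R] [LinearOrder R]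
    [IsStrictOrderedRing R] {a b c : R} (h : a ^ 2 + b ^ 2 + c ^ 2 ≤ 0) :
    a = 0 ∧ b = 0 ∧ c = 0 := by
  have ha := sq_nonneg a
  have hb := sq_nonneg b
  have hc := sq_nonneg c
  refine ⟨?_, ?_, ?_⟩ <;> refine pow_eq_zero_iff two_ne_zero |>.mp ?_ <;> linarith

theorem coeff_neg_of_normal_equations {p00 p10 p01 p11 q00 q10 q01 q11 β0 βX βW : ℝ}
    (hq00 : 0 < q00) (hq10 : 0 < q10) (hq01 : 0 < q01) (hq11 : 0 < q11)
    (h1 : p10 < p00) (h2 : p11 < p01)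
    (h0 : q00 * (β0 - p00) + q10 * (β0 + βX - p10) + q01 * (β0 + βW - p01) +
      q11 * (β0 + βX + βW - p11) = 0)
    (hX : q10 * (β0 + βX - p10) + q11 * (β0 + βX + βW - p11) = 0)
    (hW : q01 * (β0 + βW - p01) + q11 * (β0 + βX + βW - p11) = 0) :
    βX < 0 := by
  rcases le_total 0 (β0 + βX + βW - p11) with he | he
  · have hr11 := mul_nonneg hq11.le he
    have hfit00 : p00 ≤ β0 := sub_nonneg.mp <| nonneg_of_mul_nonneg_right (by linarith) hq00
    have hfit10 : β0 + βX ≤ p10 := sub_nonpos.mp <| nonpos_of_mul_nonpos_right (by linarith) hq10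
    linarith
  · have hr11 := mul_nonpos_of_nonneg_of_nonpos hq11.le he
    have hfit01 : p01 ≤ β0 + βW := sub_nonneg.mp <| nonneg_of_mul_nonneg_right (by linarith) hq01
    linarith

theorem eventually_add_mul_add_mul_sq_lt {a b : ℝ} (ha : a < 0) (c : ℝ) :
    ∀ᶠ t in 𝓝[>] (0 : ℝ), c + a * t + b * t ^ 2 < c := by
  have hslope : ∀ᶠ t in 𝓝 (0 : ℝ), a + b * t < 0 := by
    have : Tendsto (fun t : ℝ => a + b * t) (𝓝 0) (𝓝 a) :=
      (by fun_prop : Continuous fun t : ℝ => a + b * t).tendsto' 0 a (by simp)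
    exact this.eventually (gt_mem_nhds ha)
  filter_upwards [self_mem_nhdsWithin, nhdsWithin_le_nhds hslope] with t (ht : 0 < t) hlt
  nlinarith

theorem eventually_abs_sub_mul_sub_lt (x u : ℝ) {δ : ℝ} (hδ : 0 < δ) :
    ∀ᶠ t in 𝓝 (0 : ℝ), |x - t * u - x| < δ := by
  have : Tendsto (fun t : ℝ => x - t * u) (𝓝 0) (𝓝 x) :=
    (by fun_prop : Continuous fun t : ℝ => x - t * u).tendsto' 0 x (by simp)
  simpa only [Real.dist_eq] using Metric.tendsto_nhds.mp this δ hδ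

theorem stmt_19_general (p00 p10 p01 p11 q00 q10 q01 q11 : ℝ)
    (hq00 : 0 < q00) (hq10 : 0 < q10) (hq01 : 0 < q01) (hq11 : 0 < q11)
    (h1 : p10 < p00) (h2 : p11 < p01)
    (SS : ℝ → ℝ → ℝ → ℝ)
    (hSS : ∀ β0 βX βW, SS β0 βX βW =
      q00 * (p00 * (1 - β0) ^ 2 + (1 - p00) * β0 ^ 2) +
      q10 * (p10 * (1 - β0 - βX) ^ 2 + (1 - p10) * (β0 + βX) ^ 2) +
      q01 * (p01 * (1 - β0 - βW) ^ 2 + (1 - p01) * (β0 + βW) ^ 2) +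
      q11 * (p11 * (1 - β0 - βX - βW) ^ 2 + (1 - p11) * (β0 + βX + βW) ^ 2))
    (β0 βX βW : ℝ) (hβX : 0 ≤ βX) :
    ∀ δ > 0, ∃ b0 bx bw : ℝ,
      |b0 - β0| < δ ∧ |bx - βX| < δ ∧ |bw - βW| < δ ∧
      SS b0 bx bw < SS β0 βX βW := by
  intro δ hδ
  set r00 := q00 * (β0 - p00)
  set r10 := q10 * (β0 + βX - p10)
  set r01 := q01 * (β0 + βW - p01)
  set r11 := q11 * (β0 + βX + βW - p11)
  set u0 := r00 + r10 + r01 + r11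
  set uX := r10 + r11
  set uW := r01 + r11
  have hgrad : 0 < u0 ^ 2 + uX ^ 2 + uW ^ 2 := by
    by_contra! hle
    obtain ⟨hu0, huX, huW⟩ := eq_zero_of_sq_add_sq_add_sq_nonpos hle
    exact hβX.not_gt <| coeff_neg_of_normal_equations hq00 hq10 hq01 hq11 h1 h2 hu0 huX huW
  have hline : ∀ t, SS (β0 - t * u0) (βX - t * uX) (βW - t * uW) =
      SS β0 βX βW + -2 * (u0 ^ 2 + uX ^ 2 + uW ^ 2) * t +
        (q00 * u0 ^ 2 + q10 * (u0 + uX) ^ 2 + q01 * (u0 + uW) ^ 2 +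
          q11 * (u0 + uX + uW) ^ 2) * t ^ 2 := by
    intro t
    simp only [hSS, u0, uX, uW, r00, r10, r01, r11]
    ring
  have hnear : ∀ᶠ t in 𝓝 (0 : ℝ),
      |β0 - t * u0 - β0| < δ ∧ |βX - t * uX - βX| < δ ∧ |βW - t * uW - βW| < δ :=
    (eventually_abs_sub_mul_sub_lt β0 u0 hδ).and <|
      (eventually_abs_sub_mul_sub_lt βX uX hδ).and (eventually_abs_sub_mul_sub_lt βW uW hδ)
  obtain ⟨t, hdecrease, h0, hX, hW⟩ :=
    ((eventually_add_mul_add_mul_sq_lt (by linarith : -2 * (u0 ^ 2 + uX ^ 2 + uW ^ 2) < 0)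
      (SS β0 βX βW)).and (nhdsWithin_le_nhds hnear)).exists
  exact ⟨_, _, _, h0, hX, hW, (hline t).trans_lt hdecrease⟩

theorem stmt_19 (p00 p10 p01 p11 q00 q10 q01 q11 : ℝ)
    (hp00 : p00 ∈ Set.Ioo (0:ℝ) 1) (hp10 : p10 ∈ Set.Ioo (0:ℝ) 1)
    (hp01 : p01 ∈ Set.Ioo (0:ℝ) 1) (hp11 : p11 ∈ Set.Ioo (0:ℝ) 1)
    (hq00 : 0 < q00) (hq10 : 0 < q10) (hq01 : 0 < q01) (hq11 : 0 < q11)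
    (h1 : p10 < p00) (h2 : p11 < p01)
    (SS : ℝ → ℝ → ℝ → ℝ)
    (hSS : ∀ β0 βX βW, SS β0 βX βW =
      q00 * (p00 * (1 - β0) ^ 2 + (1 - p00) * β0 ^ 2) +
      q10 * (p10 * (1 - β0 - βX) ^ 2 + (1 - p10) * (β0 + βX) ^ 2) +
      q01 * (p01 * (1 - β0 - βW) ^ 2 + (1 - p01) * (β0 + βW) ^ 2) +
      q11 * (p11 * (1 - β0 - βX - βW) ^ 2 + (1 - p11) * (β0 + βX + βW) ^ 2))
    (β0 βX βW : ℝ) (hβX : 0 ≤ βX)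
    (hfit1 : β0 ∈ Set.Icc p10 p00 ∨ β0 + βX ∈ Set.Icc p10 p00)
    (hfit2 : β0 + βW ∈ Set.Icc p11 p01 ∨ β0 + βX + βW ∈ Set.Icc p11 p01) :
    ∀ δ > 0, ∃ b0 bx bw : ℝ,
      |b0 - β0| < δ ∧ |bx - βX| < δ ∧ |bw - βW| < δ ∧
      SS b0 bx bw < SS β0 βX βW :=
  stmt_19_general p00 p10 p01 p11 q00 q10 q01 q11 hq00 hq10 hq01 hq11 h1 h2 SS hSS β0 βX βW hβX
end
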